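/- The generalized fibonomial coefficient with negative real upper argument satisfies {−α choose k}_{s,t} = (−1)^k · (−t)^{−αk − C(k,2)} · {α+k−1 choose k}_{s,t} for all real α and natural k, where C(k,2) = k(k−1)/2. -/

import Mathlib

noncomputable section
open Real

/-- Generalized Fibonacci function {α} = (φ^α − φ'^α)/(φ − φ'). -/
def genFibFun (φ φ' : ℝ) (α : ℝ) : ℝ := (φ ^ α - φ' ^ α) / (φ - φ')

def fibtorial (φ φ' : ℝ) (n : ℕ) : ℝ := ∏ j ∈ Finset.range n, genFibFun φ φ' (j + 1)

/-- Generalized fibonomial coefficient {α choose k} = {α}{α−1}⋯{α−k+1}/{k}!. -/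
def genFibonomial (φ φ' : ℝ) (α : ℝ) (k : ℕ) : ℝ :=
  (∏ j ∈ Finset.range k, genFibFun φ φ' (α - j)) / fibtorial φ φ' k

/-!
Since `φ^(-x) = φ'^x / (φφ')^x` and symmetrically, `{-x} = -(φφ')^(-x) {x}`. Applying this to
each factor of the falling product `{-α}{-α-1}⋯{-α-k+1}` gives `(-1)^k (φφ')^(-αk - C(k,2))`
times the rising product `{α}{α+1}⋯{α+k-1}`, which read backwards is the falling product of
`{α+k-1 choose k}`. For the roots `φ, φ'` of `x² - sx - t` with `s > 0 > t` one has `φ, φ' > 0`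
and `φφ' = -t`.
-/

theorem Finset.prod_range_add_natCast_eq_prod_range_sub {M : Type*} [CommMonoid M]
    (f : ℝ → M) (α : ℝ) (k : ℕ) :
    ∏ j ∈ Finset.range k, f (α + j) = ∏ j ∈ Finset.range k, f (α + k - 1 - j) := by
  rw [← Finset.prod_range_reflect (fun j : ℕ => f (α + k - 1 - j)) k]
  refine Finset.prod_congr rfl fun j hj => congrArg f ?_
  have hjk : 1 + j ≤ k := by rw [add_comm]; exact Finset.mem_range.mp hj
  rw [Nat.sub_sub, Nat.cast_sub hjk]
  push_cast
  ring

theorem Real.prod_range_rpow_neg_add {x : ℝ} (hx : 0 < x) (α : ℝ) (k : ℕ) :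
    ∏ j ∈ Finset.range k, x ^ (-(α + j)) = x ^ (-(α * k) - (k * (k - 1) / 2 : ℕ) : ℝ) := by
  rw [← Real.rpow_sum_of_pos hx, Finset.sum_neg_distrib, Finset.sum_add_distrib,
    Finset.sum_const, Finset.card_range, ← Nat.cast_sum, Finset.sum_range_id, nsmul_eq_mul]
  congr 1
  ring

section Positive

variable {φ φ' : ℝ}

theorem genFibFun_neg (hφ : 0 < φ) (hφ' : 0 < φ') (x : ℝ) :
    genFibFun φ φ' (-x) = -(φ * φ') ^ (-x) * genFibFun φ φ' x := by
  have hφx : φ ^ x ≠ 0 := (Real.rpow_pos_of_pos hφ x).ne'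
  have hφ'x : φ' ^ x ≠ 0 := (Real.rpow_pos_of_pos hφ' x).ne'
  rw [genFibFun, genFibFun, Real.mul_rpow hφ.le hφ'.le, Real.rpow_neg hφ.le,
    Real.rpow_neg hφ'.le]
  field_simp
  ring

theorem prod_genFibFun_neg_sub (hφ : 0 < φ) (hφ' : 0 < φ') (α : ℝ) (k : ℕ) :
    ∏ j ∈ Finset.range k, genFibFun φ φ' (-α - j) =
      (-1) ^ k * (φ * φ') ^ (-(α * k) - (k * (k - 1) / 2 : ℕ) : ℝ) *
        ∏ j ∈ Finset.range k, genFibFun φ φ' (α + j) := by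
  have hfactor (j : ℕ) : genFibFun φ φ' (-α - j) =
      -1 * (φ * φ') ^ (-(α + j)) * genFibFun φ φ' (α + j) := by
    rw [show -α - (j : ℝ) = -(α + j) by ring, genFibFun_neg hφ hφ']
    ring
  rw [Finset.prod_congr rfl fun j _ => hfactor j, Finset.prod_mul_distrib,
    Finset.prod_mul_distrib, Finset.prod_const, Finset.card_range,
    Real.prod_range_rpow_neg_add (mul_pos hφ hφ')]

theorem genFibonomial_neg_of_pos (hφ : 0 < φ) (hφ' : 0 < φ') (α : ℝ) (k : ℕ) :
    genFibonomial φ φ' (-α) k =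
      (-1) ^ k * (φ * φ') ^ (-(α * k) - (k * (k - 1) / 2 : ℕ) : ℝ) *
        genFibonomial φ φ' (α + k - 1) k := by
  rw [genFibonomial, genFibonomial, prod_genFibFun_neg_sub hφ hφ',
    Finset.prod_range_add_natCast_eq_prod_range_sub, mul_div_assoc]

end Positive

theorem genFibonomial_neg_general (s t : ℝ) (hs : 0 < s) (ht : t < 0)
    (hdisc : s ^ 2 + 4 * t > 0) (φ φ' : ℝ)
    (hφ : φ = (s + Real.sqrt (s ^ 2 + 4 * t)) / 2)
    (hφ' : φ' = (s - Real.sqrt (s ^ 2 + 4 * t)) / 2)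
    (α : ℝ) (k : ℕ) :
    genFibonomial φ φ' (-α) k =
      (-1 : ℝ) ^ k * (-t) ^ (-(α * k) - (k * (k - 1) / 2 : ℕ) : ℝ) *
        genFibonomial φ φ' (α + k - 1) k := by
  have hsq : Real.sqrt (s ^ 2 + 4 * t) ^ 2 = s ^ 2 + 4 * t := Real.sq_sqrt hdisc.le
  have hroot_lt : Real.sqrt (s ^ 2 + 4 * t) < s := (Real.sqrt_lt' hs).mpr (by linarith)
  have hφpos : 0 < φ := by rw [hφ]; positivity
  have hφ'pos : 0 < φ' := by rw [hφ']; linarith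
  have hprod : φ * φ' = -t := by rw [hφ, hφ']; linear_combination (-1 / 4 : ℝ) * hsq
  rw [genFibonomial_neg_of_pos hφpos hφ'pos, hprod]

theorem genFibonomial_neg (s t : ℝ) (hs : 0 < s) (ht : t < 0)
    (hdisc : s ^ 2 + 4 * t > 0) (φ φ' : ℝ)
    (hφ : φ = (s + Real.sqrt (s ^ 2 + 4 * t)) / 2)
    (hφ' : φ' = (s - Real.sqrt (s ^ 2 + 4 * t)) / 2)
    (α : ℝ) (k : ℕ) (hnz : fibtorial φ φ' k ≠ 0) :
    genFibonomial φ φ' (-α) k =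
      (-1 : ℝ) ^ k * (-t) ^ (-(α * k) - (k * (k - 1) / 2 : ℕ) : ℝ) *
        genFibonomial φ φ' (α + k - 1) k :=
  genFibonomial_neg_general s t hs ht hdisc φ φ' hφ hφ' α k
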